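/- arXiv:2410.07938 — 2 statements merged into one kernel-verified Lean document; each statement's English description precedes it below -/
import Mathlib

section
/- For every k > 1 and every γ ∈ ℝ^d with |γ| ≤ 2k, the Fourier coefficient of the strength satisfies |σ̂(γ)| ≤ (n²/|β_d|²) k^{m+4n−d−1} M_PL(k) + C₁ k^{−1}. -/
/-!
Since `d ≥ 2`, every `γ` with `|γ| ≤ 2k` can be written as `k (x̂ + ŷ)` with unit vectors `x̂, ŷ`:
take `γ / (2k)` plus or minus a multiple of a unit vector orthogonal to `γ`. For this pair,
`F_PL(x̂, ŷ, k)` is `k^{-m} σ̂(γ)` plus the `r`-integral, up to the factor `β_d² k^{d+1-4n} / n²`,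
and the `r`-integral has modulus at most `C₁ k^{-m-1}` because `|k ŷ| = k > 1`. Solving for
`σ̂(γ)` gives the bound; `M_PL(k)` is a genuine supremum because `|σ̂| ≤ ‖σ‖_{L¹}` uniformly.
-/

open MeasureTheory

noncomputable section

/-- `ℝ^d` with the Euclidean structure. -/
abbrev Ed (d : ℕ) := EuclideanSpace ℝ (Fin d)

/-- `β_d = e^{iπ/4}/√(8π)` for `d = 2` and `β_d = 1/(4π)` otherwise (`d = 3`). -/
def betaD (d : ℕ) : ℂ :=
  if d = 2 then Complex.exp (Complex.I * Real.pi / 4) / (Real.sqrt (8 * Real.pi) : ℝ)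
  else 1 / (4 * (Real.pi : ℂ))

/-- Fourier transform `σ̂(γ) = ∫_{ℝ^d} σ(z) e^{-iγ·z} dz` of a real-valued function. -/
def sigmaHat (d : ℕ) (σ : Ed d → ℝ) (γ : Ed d) : ℂ :=
  ∫ z, (σ z : ℂ) * Complex.exp (-Complex.I * ((inner ℝ γ z : ℝ) : ℂ))

/-- Correlation of far-field patterns of the stochastic polyharmonic wave equation:
`F_PL(x̂,ŷ,k) = (β_d²/n²) k^{d+1−4n} (k^{−m} σ̂(k(x̂+ŷ)) + ∫_{B₁} r(z,−kŷ) e^{−ik(x̂+ŷ)·z} dz)`. -/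
def FPL (d n : ℕ) (m : ℝ) (σ : Ed d → ℝ) (r : Ed d → Ed d → ℂ) (k : ℝ)
    (x y : Ed d) : ℂ :=
  (betaD d) ^ 2 / (n : ℂ) ^ 2 * ((k ^ ((d : ℝ) + 1 - 4 * (n : ℝ)) : ℝ) : ℂ) *
    (((k ^ (-m) : ℝ) : ℂ) * sigmaHat d σ (k • (x + y)) +
      ∫ z in Metric.ball (0 : Ed d) 1,
        r z (-(k • y)) * Complex.exp (-Complex.I * ((inner ℝ (k • (x + y)) z : ℝ) : ℂ)))

/-- `M_PL(k) = sup_{x̂,ŷ ∈ S^{d−1}} |F_PL(x̂,ŷ,k)|`. -/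
def MPL (d n : ℕ) (m : ℝ) (σ : Ed d → ℝ) (r : Ed d → Ed d → ℂ) (k : ℝ) : ℝ :=
  sSup {v : ℝ | ∃ x y : Ed d, ‖x‖ = 1 ∧ ‖y‖ = 1 ∧ v = ‖FPL d n m σ r k x y‖}

end

open Module

section UnitVectors

variable {E : Type*} [NormedAddCommGroup E] [InnerProductSpace ℝ E]

theorem exists_norm_eq_one_inner_eq_zero [FiniteDimensional ℝ E] (hE : 2 ≤ finrank ℝ E) (v : E) :
    ∃ w : E, ‖w‖ = 1 ∧ inner ℝ v w = 0 := by
  have hne : (ℝ ∙ v)ᗮ ≠ ⊥ := by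
    rw [Ne, Submodule.orthogonal_eq_bot_iff]
    intro htop
    have := finrank_span_le_card (R := ℝ) ({v} : Set E)
    rw [htop, finrank_top] at this
    simp only [Set.toFinset_singleton, Finset.card_singleton] at this
    omega
  obtain ⟨w, hw, hw0⟩ := Submodule.exists_mem_ne_zero_of_ne_bot hne
  refine ⟨(‖w‖⁻¹ : ℝ) • w, norm_smul_inv_norm hw0, ?_⟩
  rw [real_inner_smul_right, Submodule.mem_orthogonal_singleton_iff_inner_right.mp hw, mul_zero]

theorem norm_half_smul_add_smul_sq {v w : E} (hw : ‖w‖ = 1) (hvw : inner ℝ v w = 0) (s : ℝ) :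
    ‖(2⁻¹ : ℝ) • v + s • w‖ ^ 2 = ‖v‖ ^ 2 / 4 + s ^ 2 := by
  rw [norm_add_sq_real, real_inner_smul_left, real_inner_smul_right, hvw, norm_smul,
    norm_smul, hw, Real.norm_eq_abs, Real.norm_eq_abs, mul_pow, mul_pow, sq_abs, sq_abs]
  ring

theorem exists_norm_eq_one_add_eq [FiniteDimensional ℝ E] (hE : 2 ≤ finrank ℝ E) {v : E}
    (hv : ‖v‖ ≤ 2) : ∃ x y : E, ‖x‖ = 1 ∧ ‖y‖ = 1 ∧ x + y = v := by
  obtain ⟨w, hw, hvw⟩ := exists_norm_eq_one_inner_eq_zero hE v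
  set t := √(1 - ‖v‖ ^ 2 / 4)
  have ht : t ^ 2 = 1 - ‖v‖ ^ 2 / 4 := Real.sq_sqrt (by nlinarith [norm_nonneg v])
  have hunit : ∀ s : ℝ, s ^ 2 = t ^ 2 → ‖(2⁻¹ : ℝ) • v + s • w‖ = 1 := fun s hs ↦
    (pow_eq_one_iff_of_nonneg (norm_nonneg _) two_ne_zero).mp
      (by rw [norm_half_smul_add_smul_sq hw hvw, hs, ht]; ring)
  refine ⟨(2⁻¹ : ℝ) • v + t • w, (2⁻¹ : ℝ) • v + (-t) • w, hunit t rfl, hunit (-t) (neg_sq t), ?_⟩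
  rw [add_add_add_comm, ← add_smul, ← add_smul]
  norm_num

end UnitVectors

theorem norm_integral_mul_exp_neg_I_mul_le {α : Type*} [MeasurableSpace α] (μ : Measure α)
    (f : α → ℂ) (φ : α → ℝ) :
    ‖∫ z, f z * Complex.exp (-Complex.I * φ z) ∂μ‖ ≤ ∫ z, ‖f z‖ ∂μ := by
  refine (norm_integral_le_integral_norm _).trans_eq (integral_congr_ae (ae_of_all _ fun z ↦ ?_))
  simp [Complex.norm_exp]

theorem norm_sigmaHat_le (d : ℕ) (σ : Ed d → ℝ) (γ : Ed d) :
    ‖sigmaHat d σ γ‖ ≤ ∫ z, ‖σ z‖ := by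
  rw [sigmaHat]
  simpa only [Complex.norm_real] using norm_integral_mul_exp_neg_I_mul_le volume (σ · : Ed d → ℂ) _

theorem betaD_ne_zero (d : ℕ) : betaD d ≠ 0 := by
  unfold betaD
  split_ifs
  · exact div_ne_zero (Complex.exp_ne_zero _) (Complex.ofReal_ne_zero.mpr (by positivity))
  · simp [Real.pi_ne_zero]

theorem norm_FPL {d n : ℕ} {m k : ℝ} (hk : 0 < k) (σ : Ed d → ℝ) (r : Ed d → Ed d → ℂ)
    (x y : Ed d) :
    ‖FPL d n m σ r k x y‖ = ‖betaD d‖ ^ 2 / (n : ℝ) ^ 2 * k ^ ((d : ℝ) + 1 - 4 * (n : ℝ)) *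
      ‖((k ^ (-m) : ℝ) : ℂ) * sigmaHat d σ (k • (x + y)) +
        ∫ z in Metric.ball (0 : Ed d) 1,
          r z (-(k • y)) * Complex.exp (-Complex.I * ((inner ℝ (k • (x + y)) z : ℝ) : ℂ))‖ := by
  rw [FPL, norm_mul, norm_mul, norm_div, norm_pow, norm_pow, Complex.norm_natCast,
    Complex.norm_real, Real.norm_of_nonneg (by positivity)]

section FarField

variable {d n : ℕ} {m C₁ : ℝ} {r : Ed d → Ed d → ℂ}
  (hr_bd : ∀ ξ : Ed d, 1 < ‖ξ‖ →
    (∫ z in Metric.ball (0 : Ed d) 1, ‖r z ξ‖) ≤ C₁ * ‖ξ‖ ^ (-(m + 1)))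
include hr_bd

theorem norm_remainder_integral_le {k : ℝ} (hk : 1 < k) {y : Ed d} (hy : ‖y‖ = 1) (w : Ed d) :
    ‖∫ z in Metric.ball (0 : Ed d) 1,
        r z (-(k • y)) * Complex.exp (-Complex.I * ((inner ℝ w z : ℝ) : ℂ))‖ ≤
      C₁ * k ^ (-(m + 1)) := by
  have hky : ‖-(k • y)‖ = k := by
    rw [norm_neg, norm_smul, hy, mul_one, Real.norm_of_nonneg (by linarith)]
  calc _ ≤ ∫ z in Metric.ball (0 : Ed d) 1, ‖r z (-(k • y))‖ :=
        norm_integral_mul_exp_neg_I_mul_le _ _ _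
    _ ≤ C₁ * ‖-(k • y)‖ ^ (-(m + 1)) := hr_bd _ (by rw [hky]; exact hk)
    _ = C₁ * k ^ (-(m + 1)) := by rw [hky]

theorem bddAbove_norm_FPL (σ : Ed d → ℝ) {k : ℝ} (hk : 1 < k) :
    BddAbove {v : ℝ | ∃ x y : Ed d, ‖x‖ = 1 ∧ ‖y‖ = 1 ∧ v = ‖FPL d n m σ r k x y‖} := by
  refine ⟨‖betaD d‖ ^ 2 / (n : ℝ) ^ 2 * k ^ ((d : ℝ) + 1 - 4 * (n : ℝ)) *
    (k ^ (-m) * (∫ z, ‖σ z‖) + C₁ * k ^ (-(m + 1))), ?_⟩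
  rintro _ ⟨x, y, -, hy, rfl⟩
  rw [norm_FPL (by linarith)]
  gcongr
  refine (norm_add_le _ _).trans (add_le_add ?_ (norm_remainder_integral_le hr_bd hk hy _))
  rw [norm_mul, Complex.norm_real, Real.norm_of_nonneg (by positivity)]
  gcongr
  exact norm_sigmaHat_le d σ _

theorem norm_FPL_le_MPL (σ : Ed d → ℝ) {k : ℝ} (hk : 1 < k) {x y : Ed d} (hx : ‖x‖ = 1)
    (hy : ‖y‖ = 1) : ‖FPL d n m σ r k x y‖ ≤ MPL d n m σ r k :=
  le_csSup (bddAbove_norm_FPL hr_bd σ hk) ⟨x, y, hx, hy, rfl⟩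

end FarField

theorem norm_le_of_norm_rpow_neg_mul_add_le {s J : ℂ} {a M k m C : ℝ} (ha : 0 < a) (hk : 0 < k)
    (hF : a * ‖((k ^ (-m) : ℝ) : ℂ) * s + J‖ ≤ M) (hJ : ‖J‖ ≤ C * k ^ (-(m + 1))) :
    ‖s‖ ≤ k ^ m / a * M + C * k⁻¹ := by
  have hkm : k ^ m * k ^ (-m) = 1 := by rw [← Real.rpow_add hk, add_neg_cancel, Real.rpow_zero]
  have hk1 : k ^ m * k ^ (-(m + 1)) = k⁻¹ := by
    rw [← Real.rpow_add hk, show m + -(m + 1) = -1 by ring, Real.rpow_neg_one]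
  have hs : k ^ (-m) * ‖s‖ ≤ M / a + C * k ^ (-(m + 1)) := calc
    k ^ (-m) * ‖s‖ = ‖((k ^ (-m) : ℝ) : ℂ) * s‖ := by
      rw [norm_mul, Complex.norm_real, Real.norm_of_nonneg (by positivity)]
    _ ≤ ‖((k ^ (-m) : ℝ) : ℂ) * s + J‖ + ‖J‖ := by
      simpa only [add_sub_cancel_left] using
        norm_le_norm_add_norm_sub (((k ^ (-m) : ℝ) : ℂ) * s + J) (((k ^ (-m) : ℝ) : ℂ) * s)
    _ ≤ M / a + C * k ^ (-(m + 1)) := add_le_add ((le_div_iff₀' ha).mpr hF) hJ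
  calc ‖s‖ = k ^ m * (k ^ (-m) * ‖s‖) := by rw [← mul_assoc, hkm, one_mul]
    _ ≤ k ^ m * (M / a + C * k ^ (-(m + 1))) := by gcongr
    _ = k ^ m / a * M + C * k⁻¹ := by rw [← hk1]; ring

theorem statement3_general (d n : ℕ) (hd : d = 2 ∨ d = 3) (hn : 1 ≤ n) (m C₁ : ℝ)
    (σ : Ed d → ℝ)
    (r : Ed d → Ed d → ℂ)
    (hr_bd : ∀ ξ : Ed d, 1 < ‖ξ‖ →
      (∫ z in Metric.ball (0 : Ed d) 1, ‖r z ξ‖) ≤ C₁ * ‖ξ‖ ^ (-(m + 1)))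
    (k : ℝ) (hk : 1 < k) (γ : Ed d) (hγ : ‖γ‖ ≤ 2 * k) :
    ‖sigmaHat d σ γ‖ ≤
      (n : ℝ) ^ 2 / ‖betaD d‖ ^ 2 * k ^ (m + 4 * (n : ℝ) - (d : ℝ) - 1) *
        MPL d n m σ r k + C₁ * k⁻¹ := by
  have hk0 : 0 < k := by linarith
  have hdim : 2 ≤ finrank ℝ (Ed d) := by rw [finrank_euclideanSpace_fin]; omega
  obtain ⟨x, y, hx, hy, hxy⟩ := exists_norm_eq_one_add_eq hdim (v := k⁻¹ • γ) (by
    rw [norm_smul, norm_inv, Real.norm_of_nonneg hk0.le, inv_mul_le_iff₀ hk0, mul_comm]; exact hγ)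
  have hγ_eq : k • (x + y) = γ := by rw [hxy, smul_inv_smul₀ hk0.ne']
  have hF := norm_FPL_le_MPL (n := n) hr_bd σ hk hx hy
  rw [norm_FPL hk0, hγ_eq] at hF
  have ha : 0 < ‖betaD d‖ ^ 2 / (n : ℝ) ^ 2 * k ^ ((d : ℝ) + 1 - 4 * (n : ℝ)) := by
    have hβ := betaD_ne_zero d
    have hn0 : (n : ℝ) ≠ 0 := Nat.cast_ne_zero.mpr (by omega)
    positivity
  convert norm_le_of_norm_rpow_neg_mul_add_le ha hk0 hF (norm_remainder_integral_le hr_bd hk hy γ) using 2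
  rw [show m + 4 * (n : ℝ) - d - 1 = m - (d + 1 - 4 * n) by ring, Real.rpow_sub hk0]
  field_simp

/-- For every `k > 1` and every `γ ∈ ℝ^d` with `|γ| ≤ 2k`, the Fourier
coefficient of the strength satisfies
`|σ̂(γ)| ≤ (n²/|β_d|²) k^{m+4n−d−1} M_PL(k) + C₁ k⁻¹`. -/
theorem statement3 (d n : ℕ) (hd : d = 2 ∨ d = 3) (hn : 1 ≤ n) (m C₁ : ℝ) (hC₁ : 0 < C₁)
    (σ : Ed d → ℝ) (hσ_int : Integrable σ) (hσ_nn : ∀ z, 0 ≤ σ z)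
    (hσ_supp : ∀ z ∉ Metric.ball (0 : Ed d) 1, σ z = 0)
    (r : Ed d → Ed d → ℂ) (hr_int : ∀ ξ, Integrable (fun z => r z ξ))
    (hr_supp : ∀ ξ : Ed d, ∀ z ∉ Metric.ball (0 : Ed d) 1, r z ξ = 0)
    (hr_bd : ∀ ξ : Ed d, 1 < ‖ξ‖ →
      (∫ z in Metric.ball (0 : Ed d) 1, ‖r z ξ‖) ≤ C₁ * ‖ξ‖ ^ (-(m + 1)))
    (k : ℝ) (hk : 1 < k) (γ : Ed d) (hγ : ‖γ‖ ≤ 2 * k) :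
    ‖sigmaHat d σ γ‖ ≤
      (n : ℝ) ^ 2 / ‖betaD d‖ ^ 2 * k ^ (m + 4 * (n : ℝ) - (d : ℝ) - 1) *
        MPL d n m σ r k + C₁ * k⁻¹ :=
  statement3_general d n hd hn m C₁ σ r hr_bd k hk γ hγ
end

section
/- Let n ≥ 1 be an integer and d ∈ {2,3}. There exists a constant C > 0, depending only on n and d, such that for every k > 0 and every t ∈ ℝ with k/2 < t < k, one has | 1/(t^{2n} − k^{2n}) + ((2k − t)/t)^{d−1} / ((2k − t)^{2n} − k^{2n}) | ≤ C k^{−2n}. (Note that for k/2 < t < k both denominators are nonzero: t^{2n} < k^{2n} and (2k−t)^{2n} > k^{2n}.) -/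
open Finset in
lemma pow_sub_pow_bounds {a b : ℝ} (ha : 0 ≤ a) (hab : a ≤ b) (m : ℕ) :
    (m : ℝ) * a ^ (m - 1) * (b - a) ≤ b ^ m - a ^ m ∧
      b ^ m - a ^ m ≤ (m : ℝ) * b ^ (m - 1) * (b - a) := by
  have hb : 0 ≤ b := ha.trans hab
  have key : (∑ i ∈ range m, b ^ i * a ^ (m - 1 - i)) * (b - a) = b ^ m - a ^ m :=
    geom_sum₂_mul b a m
  have hba : 0 ≤ b - a := sub_nonneg.mpr hab
  constructor
  · rw [← key]
    refine mul_le_mul_of_nonneg_right ?_ hba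
    have hterm : ∀ i ∈ range m, a ^ (m - 1) ≤ b ^ i * a ^ (m - 1 - i) := by
      intro i hi
      have hi' : i < m := mem_range.mp hi
      have e : a ^ (m - 1) = a ^ i * a ^ (m - 1 - i) := by
        rw [← pow_add]; congr 1; omega
      rw [e]
      exact mul_le_mul_of_nonneg_right (pow_le_pow_left₀ ha hab i) (pow_nonneg ha _)
    calc (m:ℝ) * a ^ (m-1) = ∑ _i ∈ range m, a ^ (m-1) := by
          rw [sum_const, card_range, nsmul_eq_mul]
      _ ≤ _ := sum_le_sum hterm
  · rw [← key]
    refine mul_le_mul_of_nonneg_right ?_ hba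
    have hterm : ∀ i ∈ range m, b ^ i * a ^ (m - 1 - i) ≤ b ^ (m-1) := by
      intro i hi
      have hi' : i < m := mem_range.mp hi
      have e : b ^ (m - 1) = b ^ i * b ^ (m - 1 - i) := by
        rw [← pow_add]; congr 1; omega
      rw [e]
      exact mul_le_mul_of_nonneg_left (pow_le_pow_left₀ ha hab _) (pow_nonneg hb _)
    calc ∑ i ∈ range m, b ^ i * a ^ (m-1-i) ≤ ∑ _i ∈ range m, b ^ (m-1) :=
          sum_le_sum hterm
      _ = (m:ℝ) * b ^ (m-1) := by rw [sum_const, card_range, nsmul_eq_mul]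

lemma statement16_cbound (j : ℕ) :
    16 * ((j:ℝ)+2) + 2 * ((j:ℝ)+2) * ((j:ℝ)+1) * 2 ^ j
      ≤ 64 * 4 ^ (j+2) * ((j:ℝ)+2) ^ 2 := by
  have h2j : (2:ℝ) ^ j ≤ 4 ^ (j+2) := by
    calc (2:ℝ) ^ j ≤ 4 ^ j := by gcongr <;> norm_num
      _ ≤ 4 ^ (j+2) := by
          apply pow_le_pow_right₀ (by norm_num)
          omega
  have h4 : (1:ℝ) ≤ 4 ^ (j+2) := one_le_pow₀ (by norm_num)
  have hj0 : (0:ℝ) ≤ (j:ℝ) := Nat.cast_nonneg j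
  nlinarith [mul_le_mul_of_nonneg_left h2j
      (show (0:ℝ) ≤ 2 * ((j:ℝ)+2) * ((j:ℝ)+1) by positivity),
    mul_le_mul_of_nonneg_left h4 (show (0:ℝ) ≤ 16 * ((j:ℝ)+2) by positivity),
    mul_le_mul_of_nonneg_left h4 (show (0:ℝ) ≤ ((j:ℝ)+2)^2 by positivity)]

set_option maxHeartbeats 1000000 in
/-- key cancellation estimate for the polyharmonic resolvent. For an
integer `n ≥ 1` and `d ∈ {2,3}`, there is `C > 0` depending only on `n` and `d` such
that for every `k > 0` and every `t` with `k/2 < t < k`,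
`| 1/(t^{2n} − k^{2n}) + ((2k−t)/t)^{d−1} / ((2k−t)^{2n} − k^{2n}) | ≤ C k^{−2n}`. -/
theorem statement16 (n d : ℕ) (hn : 1 ≤ n) (hd : d = 2 ∨ d = 3) :
    ∃ C > (0 : ℝ), ∀ k t : ℝ, 0 < k → k / 2 < t → t < k →
      |1 / (t ^ (2 * n) - k ^ (2 * n)) +
          ((2 * k - t) / t) ^ (d - 1) / ((2 * k - t) ^ (2 * n) - k ^ (2 * n))| ≤
        C * (k ^ (2 * n))⁻¹ := by
  obtain ⟨j, hj⟩ : ∃ j, 2 * n = j + 2 := ⟨2 * n - 2, by omega⟩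
  refine ⟨32 * 8 ^ (2 * n), by positivity, ?_⟩
  intro k t hk ht1 ht2
  rw [hj]
  have ht0 : 0 < t := lt_trans (by linarith) ht1
  set s := 2 * k - t with hs_def
  set h := k - t with hh_def
  have hh0 : 0 < h := by rw [hh_def]; linarith
  have hhk : h < k / 2 := by rw [hh_def]; linarith
  have hts : t ≤ s := by rw [hs_def]; linarith
  have hks : k ≤ s := by rw [hs_def]; linarith
  have hs2k : s ≤ 2 * k := by rw [hs_def]; linarith
  have htk : t ≤ k := ht2.le
  set A := k ^ (j+2) - t ^ (j+2) with hA_def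
  set B := s ^ (j+2) - k ^ (j+2) with hB_def
  set r := (s / t) ^ (d - 1) with hr_def
  -- bounds on A and B
  have hboundsA := pow_sub_pow_bounds ht0.le htk (j+2)
  have hboundsB := pow_sub_pow_bounds (by linarith : (0:ℝ) ≤ k) hks (j+2)
  have hkt : k - t = h := rfl
  have hsk : s - k = h := by rw [hs_def, hh_def]; ring
  have hA1 : ((j:ℝ)+2) * t ^ (j+1) * h ≤ A := by
    have := hboundsA.1; push_cast at this; rw [hkt] at this; exact this
  have hA2 : A ≤ ((j:ℝ)+2) * k ^ (j+1) * h := by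
    have := hboundsA.2; push_cast at this; rw [hkt] at this; exact this
  have hB1 : ((j:ℝ)+2) * k ^ (j+1) * h ≤ B := by
    have := hboundsB.1; push_cast at this; rw [hsk] at this; exact this
  have hB2 : B ≤ ((j:ℝ)+2) * s ^ (j+1) * h := by
    have := hboundsB.2; push_cast at this; rw [hsk] at this; exact this
  have hA : 0 < A := lt_of_lt_of_le (by positivity) hA1
  have hB : 0 < B := lt_of_lt_of_le (by positivity) hB1
  -- second-order bound on B - A
  have hst : s ^ (j+1) - t ^ (j+1) ≤ ((j:ℝ)+1) * s ^ j * (2 * h) := by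
    have hb := (pow_sub_pow_bounds ht0.le hts (j+1)).2
    simp only [Nat.add_sub_cancel] at hb
    push_cast at hb
    have hst2 : s - t = 2 * h := by rw [hs_def, hh_def]; ring
    rw [hst2] at hb
    exact hb
  have hBA : B - A ≤ 2 * ((j:ℝ)+2) * ((j:ℝ)+1) * (2*k) ^ j * h ^ 2 := by
    have hs0 : (0:ℝ) ≤ s := by linarith
    calc B - A ≤ ((j:ℝ)+2) * s ^ (j+1) * h - ((j:ℝ)+2) * t ^ (j+1) * h := by linarith
      _ = ((j:ℝ)+2) * h * (s ^ (j+1) - t ^ (j+1)) := by ring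
      _ ≤ ((j:ℝ)+2) * h * (((j:ℝ)+1) * s ^ j * (2 * h)) :=
          mul_le_mul_of_nonneg_left hst (by positivity)
      _ = 2 * ((j:ℝ)+2) * ((j:ℝ)+1) * s ^ j * h ^ 2 := by ring
      _ ≤ 2 * ((j:ℝ)+2) * ((j:ℝ)+1) * (2*k) ^ j * h ^ 2 := by
          gcongr
  have hBA0 : 0 ≤ B - A := by linarith
  -- bounds on r
  have hr1 : 1 ≤ r := by
    rw [hr_def]
    exact one_le_pow₀ ((one_le_div ht0).mpr hts)
  have hr2 : r - 1 ≤ 16 * h / k := by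
    rw [hr_def]
    obtain rfl | rfl := hd
    · show (s / t) ^ 1 - 1 ≤ 16 * h / k
      rw [pow_one, div_sub_one ht0.ne', div_le_div_iff₀ ht0 hk]
      have : s - t = 2 * h := by rw [hs_def, hh_def]; ring
      nlinarith [hh0, ht1]
    · show (s / t) ^ 2 - 1 ≤ 16 * h / k
      rw [div_pow, div_sub_one (by positivity : t^2 ≠ 0), div_le_div_iff₀ (by positivity) hk]
      have hs2 : s ^ 2 - t ^ 2 = 4 * k * h := by rw [hs_def, hh_def]; ring
      rw [hs2]
      have h1 : (0:ℝ) ≤ 2*t - k := by linarith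
      have h2 : (0:ℝ) ≤ 2*t + k := by linarith
      nlinarith [mul_nonneg (mul_nonneg hh0.le h1) h2]
  have hr0 : 0 ≤ r - 1 := by linarith
  clear_value s h A B r
  -- rewrite the expression
  have hexpr : 1 / (t ^ (j+2) - k ^ (j+2)) + r / B
      = (r * A - B) / (A * B) := by
    rw [show t ^ (j+2) - k ^ (j+2) = -A from by rw [hA_def]; ring]
    field_simp [hA.ne', hB.ne']
    ring
  rw [hexpr, abs_div, abs_of_pos (mul_pos hA hB), div_le_iff₀ (mul_pos hA hB)]
  -- numerator bound
  have hnum1 : (r - 1) * A ≤ (16 * h / k) * (((j:ℝ)+2) * k ^ (j+1) * h) :=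
    mul_le_mul hr2 hA2 hA.le (by positivity)
  have hN : |r * A - B| ≤ (16 * h / k) * (((j:ℝ)+2) * k ^ (j+1) * h)
      + 2 * ((j:ℝ)+2) * ((j:ℝ)+1) * (2*k) ^ j * h ^ 2 := by
    have e : r * A - B = (r - 1) * A - (B - A) := by ring
    rw [e, abs_le]
    constructor
    · have : 0 ≤ (r - 1) * A := mul_nonneg hr0 hA.le
      linarith
    · have : 0 ≤ (r - 1) * A := mul_nonneg hr0 hA.le
      linarith
  -- simplify numerator bound to c1 * (k^j * h^2)
  have hbd1 : (16 * h / k) * (((j:ℝ)+2) * k ^ (j+1) * h) = 16 * ((j:ℝ)+2) * (k ^ j * h ^ 2) := by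
    field_simp
    ring
  have hbd2 : 2 * ((j:ℝ)+2) * ((j:ℝ)+1) * (2*k) ^ j * h ^ 2
      = 2 * ((j:ℝ)+2) * ((j:ℝ)+1) * 2 ^ j * (k ^ j * h ^ 2) := by
    rw [mul_pow]; ring
  set c1 : ℝ := 16 * ((j:ℝ)+2) + 2 * ((j:ℝ)+2) * ((j:ℝ)+1) * 2 ^ j with hc1_def
  have hNc : |r * A - B| ≤ c1 * (k ^ j * h ^ 2) := by
    rw [hc1_def]
    calc |r * A - B| ≤ _ := hN
      _ = 16 * ((j:ℝ)+2) * (k ^ j * h ^ 2)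
          + 2 * ((j:ℝ)+2) * ((j:ℝ)+1) * 2 ^ j * (k ^ j * h ^ 2) := by rw [hbd1, hbd2]
      _ = (16 * ((j:ℝ)+2) + 2 * ((j:ℝ)+2) * ((j:ℝ)+1) * 2 ^ j) * (k ^ j * h ^ 2) := by ring
  -- c1 ≤ c2
  have hc : c1 ≤ 64 * 4 ^ (j+2) * ((j:ℝ)+2) ^ 2 := by
    rw [hc1_def]; exact statement16_cbound j
  -- denominator lower bound
  have hA1' : ((j:ℝ)+2) * (k/2) ^ (j+1) * h ≤ A := by
    refine le_trans ?_ hA1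
    gcongr <;> linarith
  have hD : ((j:ℝ)+2) * (k/2) ^ (j+1) * h * (((j:ℝ)+2) * k ^ (j+1) * h) ≤ A * B :=
    mul_le_mul hA1' hB1 (by positivity) hA.le
  -- key algebraic identity
  have keyk : 32 * 8 ^ (j+2) * (k ^ (j+2))⁻¹
        * (((j:ℝ)+2) * (k/2) ^ (j+1) * h * (((j:ℝ)+2) * k ^ (j+1) * h))
      = 64 * 4 ^ (j+2) * ((j:ℝ)+2) ^ 2 * (k ^ j * h ^ 2) := by
    have h8 : (8:ℝ) ^ (j+2) = 2 ^ (j+2) * 4 ^ (j+2) := by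
      rw [← mul_pow]; norm_num
    rw [h8, div_pow]
    field_simp
    ring
  calc |r * A - B| ≤ c1 * (k ^ j * h ^ 2) := hNc
    _ ≤ 64 * 4 ^ (j+2) * ((j:ℝ)+2) ^ 2 * (k ^ j * h ^ 2) :=
        mul_le_mul_of_nonneg_right hc (by positivity)
    _ = 32 * 8 ^ (j+2) * (k ^ (j+2))⁻¹
        * (((j:ℝ)+2) * (k/2) ^ (j+1) * h * (((j:ℝ)+2) * k ^ (j+1) * h)) := keyk.symm
    _ ≤ 32 * 8 ^ (j+2) * (k ^ (j+2))⁻¹ * (A * B) := by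
        apply mul_le_mul_of_nonneg_left hD (by positivity)
end
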